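/- arXiv:1507.02727 — 3 statements merged into one kernel-verified Lean document; each statement's English description precedes it below -/
import Mathlib

section
/- There is a constant p₀ such that the following holds for every prime p > p₀ with p ≡ 3 (mod 4). Let A, B, C be three pairwise distinct points of Π = F_p × F_p forming a non-equilateral triangle, i.e. the three squared side-lengths ‖A−B‖, ‖B−C‖, ‖A−C‖ are not all equal. Then for any partition of Π into two color classes there exist points x, y, z of the same color with ‖x−y‖ = ‖A−B‖, ‖y−z‖ = ‖B−C‖ and ‖x−z‖ = ‖A−C‖ (a monochromatic triangle congruent to the triangle ABC). -/
/-- The squared length `‖x‖ = x₁² + x₂²` of a point of `F_p × F_p`. -/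
def sqNorm {p : ℕ} (x : ZMod p × ZMod p) : ZMod p := x.1 ^ 2 + x.2 ^ 2

/-!
Encode the colouring as `ε = ±1` and move `ABC` by all rigid motions `x ↦ r x + t`, where `r`
runs over the `p + 1` points of the unit circle of `F_p[i]` (a field, as `-1` is not a square).
For the image `x, y, z`, the weight `1 + ε x ε y + ε y ε z + ε x ε z` is `4` if the image is
monochromatic and `0` otherwise. Summed over all motions it equals `(p + 1) p²` plus three
correlations `∑_{‖z‖ = d} ∑_x ε x ε (x + z)`, one per side length `d ≠ 0`.

By Parseval, such a correlation is `p⁻²` times the sum over `m` of `|ε̂ m|²` weighted by the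
Fourier transform of the circle `‖z‖ = d` at `m`. Completing the square in a Gauss sum shows
that this transform is `-K(-d, -‖m‖² / 4)` for `m ≠ 0`, with `K` a Kloosterman sum, and the fourth
moment of Kloosterman sums bounds `Re K` by `(3 p⁴ / (p - 1))^{1/4} ≤ (p + 1) / 4` once `p ≥ 1000`.
So each correlation is at least `-(p + 1) p² / 4`, the total weight is positive, and some image
of `ABC` is monochromatic.
-/

namespace MonochromaticTriangle

open Finset

section Plane

variable {p : ℕ}

/-- Multiplication in `F_p[i]`, the pair `(a, b)` standing for `a + b i`. -/
def gaussMul (z w : ZMod p × ZMod p) : ZMod p × ZMod p :=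
  (z.1 * w.1 - z.2 * w.2, z.1 * w.2 + z.2 * w.1)

def gaussInv (w : ZMod p × ZMod p) : ZMod p × ZMod p :=
  ((sqNorm w)⁻¹ * w.1, -((sqNorm w)⁻¹ * w.2))

def dot (m x : ZMod p × ZMod p) : ZMod p := m.1 * x.1 + m.2 * x.2

lemma sqNorm_gaussMul (z w : ZMod p × ZMod p) :
    sqNorm (gaussMul z w) = sqNorm z * sqNorm w := by
  simp only [sqNorm, gaussMul]; ring

lemma gaussMul_sub (r a b : ZMod p × ZMod p) :
    gaussMul r a - gaussMul r b = gaussMul r (a - b) := by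
  ext <;> simp only [gaussMul, Prod.fst_sub, Prod.snd_sub] <;> ring

end Plane

variable {p : ℕ} [Fact p.Prime]

lemma sqNorm_gaussInv (w : ZMod p × ZMod p) : sqNorm (gaussInv w) = (sqNorm w)⁻¹ := by
  simp only [sqNorm, gaussInv]
  by_cases hw : w.1 ^ 2 + w.2 ^ 2 = 0
  · simp [hw]
  · field_simp

lemma gaussMul_gaussMul_gaussInv {w : ZMod p × ZMod p} (hw : sqNorm w ≠ 0)
    (z : ZMod p × ZMod p) : gaussMul (gaussMul z w) (gaussInv w) = z := by
  simp only [sqNorm] at hw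
  ext <;> simp only [gaussMul, gaussInv, sqNorm] <;> field_simp <;> ring

lemma gaussMul_gaussInv_gaussMul {w : ZMod p × ZMod p} (hw : sqNorm w ≠ 0)
    (z : ZMod p × ZMod p) : gaussMul (gaussMul z (gaussInv w)) w = z := by
  simp only [sqNorm] at hw
  ext <;> simp only [gaussMul, gaussInv, sqNorm] <;> field_simp <;> ring

lemma sqNorm_eq_zero_iff (hp3 : p % 4 = 3) {z : ZMod p × ZMod p} : sqNorm z = 0 ↔ z = 0 := by
  refine ⟨fun h => ?_, by rintro rfl; simp [sqNorm]⟩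
  by_cases h2 : z.2 = 0
  · have h1 : z.1 ^ 2 = 0 := by simpa [sqNorm, h2] using h
    exact Prod.ext (pow_eq_zero_iff two_ne_zero |>.mp h1) h2
  · have hsq : IsSquare (-1 : ZMod p) := ⟨z.1 / z.2, by
      simp only [sqNorm] at h
      field_simp
      linear_combination -h⟩
    rw [ZMod.exists_sq_eq_neg_one_iff] at hsq
    exact absurd hp3 hsq

def circle (d : ZMod p) : Finset (ZMod p × ZMod p) := univ.filter fun z => sqNorm z = d

lemma mem_circle {d : ZMod p} {z : ZMod p × ZMod p} : z ∈ circle d ↔ sqNorm z = d := by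
  simp [circle]

lemma circle_zero (hp3 : p % 4 = 3) : circle (0 : ZMod p) = {0} := by
  ext z
  rw [mem_circle, mem_singleton, sqNorm_eq_zero_iff hp3]

lemma sum_circle_one_gaussMul {M : Type*} [AddCommMonoid M] {w : ZMod p × ZMod p}
    (hw : sqNorm w ≠ 0) (f : ZMod p × ZMod p → M) :
    ∑ r ∈ circle 1, f (gaussMul r w) = ∑ z ∈ circle (sqNorm w), f z := by
  refine sum_nbij' (gaussMul · w) (gaussMul · (gaussInv w)) (fun r hr => ?_) (fun z hz => ?_)
    (fun r _ => gaussMul_gaussMul_gaussInv hw r) (fun z _ => gaussMul_gaussInv_gaussMul hw z)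
    (fun _ _ => rfl)
  · rw [mem_circle] at hr ⊢
    rw [sqNorm_gaussMul, hr, one_mul]
  · rw [mem_circle] at hz ⊢
    rw [sqNorm_gaussMul, sqNorm_gaussInv, hz, mul_inv_cancel₀ hw]

lemma card_circle_eq_card_circle_one {d : ZMod p} (hd : d ≠ 0) :
    #(circle d) = #(circle (1 : ZMod p)) := by
  obtain ⟨a, b, hab⟩ := ZMod.sq_add_sq p d
  have hw : sqNorm ((a, b) : ZMod p × ZMod p) = d := hab
  have h := sum_circle_one_gaussMul (hw ▸ hd) (fun _ => 1)
  rw [hw] at h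
  simpa using h.symm

lemma card_circle_one (hp3 : p % 4 = 3) : #(circle (1 : ZMod p)) = p + 1 := by
  have hsum : p ^ 2 = 1 + (p - 1) * #(circle (1 : ZMod p)) := calc
    p ^ 2 = #(univ : Finset (ZMod p × ZMod p)) := by simp [sq]
    _ = ∑ d, #(circle d) := card_eq_sum_card_fiberwise fun _ _ => mem_coe.2 (mem_univ _)
    _ = #(circle 0) + ∑ d ∈ univ.erase 0, #(circle d) := (add_sum_erase _ _ (mem_univ 0)).symm
    _ = 1 + (p - 1) * #(circle 1) := by
      rw [circle_zero hp3, card_singleton,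
        sum_congr rfl fun d hd => card_circle_eq_card_circle_one (ne_of_mem_erase hd),
        sum_const, card_erase_of_mem (mem_univ _), card_univ, ZMod.card, smul_eq_mul]
  have hp := (Fact.out : p.Prime).two_le
  obtain ⟨q, rfl⟩ : ∃ q, p = q + 1 := ⟨p - 1, by omega⟩
  simp only [add_tsub_cancel_right] at hsum
  exact Nat.eq_of_mul_eq_mul_left (by omega : 0 < q) (by linarith)

lemma card_circle (hp3 : p % 4 = 3) {d : ZMod p} (hd : d ≠ 0) : #(circle d) = p + 1 := by
  rw [card_circle_eq_card_circle_one hd, card_circle_one hp3]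

local notation "ψ" => (ZMod.stdAddChar : AddChar (ZMod _) ℂ)

lemma sum_stdAddChar_mul (a : ZMod p) :
    ∑ s : ZMod p, ψ (s * a) = if a = 0 then (p : ℂ) else 0 := by
  simpa [ZMod.card] using AddChar.sum_mulShift a (ZMod.isPrimitive_stdAddChar p)

lemma sum_erase_zero_stdAddChar_mul {a : ZMod p} (ha : a ≠ 0) :
    ∑ s ∈ univ.erase 0, ψ (s * a) = -1 := by
  have h := add_sum_erase univ (fun s => ψ (s * a)) (mem_univ 0)
  rw [sum_stdAddChar_mul, if_neg ha, zero_mul, AddChar.map_zero_eq_one] at h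
  linear_combination h

lemma sum_stdAddChar_dot (m : ZMod p × ZMod p) :
    ∑ x, ψ (dot m x) = if m = 0 then (p : ℂ) ^ 2 else 0 := by
  have h (x : ZMod p × ZMod p) : ψ (dot m x) = ψ (x.1 * m.1) * ψ (x.2 * m.2) := by
    rw [← AddChar.map_add_eq_mul, dot]
    congr 1
    ring
  simp_rw [h, Fintype.sum_prod_type, ← sum_mul_sum, sum_stdAddChar_mul]
  by_cases h1 : m.1 = 0 <;> by_cases h2 : m.2 = 0 <;> simp [h1, h2, Prod.ext_iff, sq]

lemma two_ne_zero_of_mod_four_eq_three (hp3 : p % 4 = 3) : (2 : ZMod p) ≠ 0 := by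
  have : ((2 : ℕ) : ZMod p) ≠ 0 := by
    rw [Ne, ZMod.natCast_eq_zero_iff]
    intro h
    have := Nat.le_of_dvd two_pos h
    omega
  exact_mod_cast this

lemma sum_stdAddChar_mul_sqNorm (hp3 : p % 4 = 3) {s : ZMod p} (hs : s ≠ 0) :
    ∑ x, ψ (s * sqNorm x) = -p := by
  have hfiber : ∑ x, ψ (s * sqNorm x) = ∑ d, (#(circle d) : ℂ) * ψ (d * s) := by
    rw [← sum_fiberwise univ sqNorm]
    refine sum_congr rfl fun d _ => ?_
    rw [← nsmul_eq_mul, ← sum_const]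
    exact sum_congr rfl fun x hx => by rw [(mem_circle.1 hx), mul_comm]
  rw [hfiber, ← add_sum_erase _ _ (mem_univ 0), circle_zero hp3,
    sum_congr rfl fun d hd => by rw [card_circle hp3 (ne_of_mem_erase hd)], ← mul_sum,
    sum_erase_zero_stdAddChar_mul hs]
  simp

lemma sum_stdAddChar_sqNorm_add_dot (hp3 : p % 4 = 3) {s : ZMod p} (hs : s ≠ 0)
    (m : ZMod p × ZMod p) :
    ∑ x, ψ (s * sqNorm x + dot m x) = -p * ψ (-sqNorm m / (4 * s)) := by
  have h2 := two_ne_zero_of_mod_four_eq_three hp3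
  set c : ZMod p × ZMod p := ((2 * s)⁻¹ * m.1, (2 * s)⁻¹ * m.2)
  have hsquare (x : ZMod p × ZMod p) :
      s * sqNorm (x - c) + dot m (x - c) = -sqNorm m / (4 * s) + s * sqNorm x := by
    simp only [sqNorm, dot, c, Prod.fst_sub, Prod.snd_sub,
      show (4 : ZMod p) = 2 * 2 by norm_num]
    field_simp
    ring
  rw [← (Equiv.subRight c).sum_comp]
  simp only [Equiv.subRight_apply, hsquare, AddChar.map_add_eq_mul, ← mul_sum,
    sum_stdAddChar_mul_sqNorm hp3 hs]
  ring

noncomputable def kloosterman (a b : ZMod p) : ℂ := ∑ t ∈ univ.erase 0, ψ (a * t + b * t⁻¹)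

lemma conj_kloosterman (a b : ZMod p) : starRingEnd ℂ (kloosterman a b) = kloosterman a b := by
  rw [kloosterman, map_sum]
  refine sum_nbij' (- ·) (- ·) (fun t ht => ?_) (fun t ht => ?_) (fun t _ => neg_neg t)
    (fun t _ => neg_neg t) (fun t _ => ?_)
  · simpa using ht
  · simpa using ht
  · rw [← AddChar.map_neg_eq_conj, inv_neg]
    congr 1
    ring

lemma ofReal_re_kloosterman (a b : ZMod p) : ((kloosterman a b).re : ℂ) = kloosterman a b :=
  Complex.conj_eq_iff_re.1 (conj_kloosterman a b)

lemma kloosterman_eq_kloosterman_one_mul {a : ZMod p} (ha : a ≠ 0) (b : ZMod p) :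
    kloosterman a b = kloosterman 1 (a * b) := by
  refine sum_nbij' (a * ·) (a⁻¹ * ·) (fun t ht => ?_) (fun t ht => ?_) (fun t _ => ?_)
    (fun t _ => ?_) (fun t ht => ?_)
  · simpa [ha] using ht
  · simpa [ha] using ht
  · simp [ha]
  · simp [ha]
  · have ht0 : t ≠ 0 := ne_of_mem_erase ht
    congr 1
    field_simp

noncomputable def kloostermanQuadruples : Finset (Fin 4 → ZMod p) :=
  (Fintype.piFinset fun _ => univ.erase 0).filter fun s => ∑ i, s i = 0 ∧ ∑ i, (s i)⁻¹ = 0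

lemma sum_kloosterman_pow_four :
    ∑ a : ZMod p, ∑ b : ZMod p, kloosterman a b ^ 4 =
      (p : ℂ) ^ 2 * #(kloostermanQuadruples (p := p)) := by
  have hexpand (a b : ZMod p) : kloosterman a b ^ 4 =
      ∑ s ∈ Fintype.piFinset fun _ : Fin 4 => univ.erase 0,
        ψ (a * ∑ i, s i) * ψ (b * ∑ i, (s i)⁻¹) := by
    rw [← Fin.prod_const, kloosterman, prod_univ_sum]
    refine sum_congr rfl fun s _ => ?_
    simp only [Fin.prod_univ_four, Fin.sum_univ_four, ← AddChar.map_add_eq_mul]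
    congr 1
    ring
  calc ∑ a : ZMod p, ∑ b : ZMod p, kloosterman a b ^ 4
      = ∑ s ∈ Fintype.piFinset fun _ : Fin 4 => univ.erase 0,
          (∑ a : ZMod p, ψ (a * ∑ i, s i)) * ∑ b : ZMod p, ψ (b * ∑ i, (s i)⁻¹) := by
        simp_rw [hexpand, sum_mul_sum]
        exact (sum_congr rfl fun a _ => sum_comm).trans sum_comm
    _ = (p : ℂ) ^ 2 * #(kloostermanQuadruples (p := p)) := by
        simp_rw [sum_stdAddChar_mul, ite_mul, zero_mul, mul_ite, mul_zero, ← ite_and, sum_ite,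
          sum_const_zero, add_zero, sum_const, nsmul_eq_mul, kloostermanQuadruples]
        ring

lemma eq_neg_of_mem_kloostermanQuadruples {s : Fin 4 → ZMod p}
    (hs : s ∈ kloostermanQuadruples) :
    (s 2 = -s 0 ∧ s 3 = -s 1) ∨ (s 3 = -s 0 ∧ s 2 = -s 1) ∨ (s 1 = -s 0 ∧ s 3 = -s 2) := by
  simp only [kloostermanQuadruples, mem_filter, Fintype.mem_piFinset, mem_erase,
    Fin.sum_univ_four] at hs
  obtain ⟨hne, hsum, hinv⟩ := hs
  have := (hne 0).1
  have := (hne 1).1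
  have := (hne 2).1
  have := (hne 3).1
  -- `(s₀ + s₁)(s₀ + s₂)(s₀ + s₃) = s₀² Σ sᵢ + s₀s₁s₂s₃ Σ sᵢ⁻¹`
  have he3 : s 1 * s 2 * s 3 + s 0 * s 2 * s 3 + s 0 * s 1 * s 3 + s 0 * s 1 * s 2 = 0 := by
    rw [← mul_zero (s 0 * s 1 * s 2 * s 3), ← hinv]
    field_simp
  have hfactor : (s 0 + s 2) * ((s 0 + s 3) * (s 0 + s 1)) = 0 := by
    linear_combination s 0 ^ 2 * hsum + he3
  rcases mul_eq_zero.1 hfactor with h | h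
  · exact Or.inl ⟨by linear_combination h, by linear_combination hsum - h⟩
  rcases mul_eq_zero.1 h with h | h
  · exact Or.inr (Or.inl ⟨by linear_combination h, by linear_combination hsum - h⟩)
  · exact Or.inr (Or.inr ⟨by linear_combination h, by linear_combination hsum - h⟩)

lemma card_kloostermanQuadruples_le : #(kloostermanQuadruples (p := p)) ≤ 3 * p ^ 2 := by
  let pairs (f : ZMod p → ZMod p → Fin 4 → ZMod p) : Finset (Fin 4 → ZMod p) :=
    univ.image fun x : ZMod p × ZMod p => f x.1 x.2
  have hpairs (f : ZMod p → ZMod p → Fin 4 → ZMod p) : #(pairs f) ≤ p ^ 2 :=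
    card_image_le.trans (by simp [sq])
  have hsub : kloostermanQuadruples ⊆ pairs (fun a b => ![a, b, -a, -b]) ∪
      pairs (fun a b => ![a, b, -b, -a]) ∪ pairs (fun a b => ![a, -a, b, -b]) := by
    intro s hs
    simp only [pairs, mem_union, mem_image, mem_univ, true_and, Prod.exists]
    rcases eq_neg_of_mem_kloostermanQuadruples hs with ⟨e2, e3⟩ | ⟨e3, e2⟩ | ⟨e1, e3⟩
    · exact Or.inl (Or.inl ⟨s 0, s 1, by ext i; fin_cases i <;> simp [e2, e3]⟩)
    · exact Or.inl (Or.inr ⟨s 0, s 1, by ext i; fin_cases i <;> simp [e2, e3]⟩)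
    · exact Or.inr ⟨s 0, s 2, by ext i; fin_cases i <;> simp [e1, e3]⟩
  have h₁ := hpairs fun a b => ![a, b, -a, -b]
  have h₂ := hpairs fun a b => ![a, b, -b, -a]
  have h₃ := hpairs fun a b => ![a, -a, b, -b]
  have := (card_le_card hsub).trans <|
    (card_union_le _ _).trans (Nat.add_le_add_right (card_union_le _ _) _)
  omega

/-- The fourth moment over all `(a, b)` dominates the `p - 1` equal terms with `a * b = t`. -/
lemma re_kloosterman_one_pow_four_le (t : ZMod p) :
    ((p : ℝ) - 1) * (kloosterman 1 t).re ^ 4 ≤ 3 * p ^ 4 := by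
  have hmoment : ∑ a : ZMod p, ∑ b : ZMod p, (kloosterman a b).re ^ 4 =
      p ^ 2 * #(kloostermanQuadruples (p := p)) := by
    apply Complex.ofReal_injective
    push_cast
    simp_rw [ofReal_re_kloosterman]
    exact sum_kloosterman_pow_four
  have hterm (a : ZMod p) (ha : a ∈ univ.erase 0) :
      (kloosterman 1 t).re ^ 4 = (kloosterman a (a⁻¹ * t)).re ^ 4 := by
    rw [kloosterman_eq_kloosterman_one_mul (ne_of_mem_erase ha),
      mul_inv_cancel_left₀ (ne_of_mem_erase ha)]
  have hp1 : 1 ≤ p := (Fact.out : p.Prime).one_le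
  calc ((p : ℝ) - 1) * (kloosterman 1 t).re ^ 4
      = ∑ a ∈ univ.erase (0 : ZMod p), (kloosterman a (a⁻¹ * t)).re ^ 4 := by
        rw [← sum_congr rfl hterm, sum_const, card_erase_of_mem (mem_univ _), card_univ,
          ZMod.card, nsmul_eq_mul, Nat.cast_sub hp1, Nat.cast_one]
    _ ≤ ∑ a ∈ univ.erase 0, ∑ b, (kloosterman a b).re ^ 4 :=
        sum_le_sum fun a _ => single_le_sum (f := fun b => (kloosterman a b).re ^ 4)
          (fun b _ => by positivity) (mem_univ _)
    _ ≤ ∑ a, ∑ b, (kloosterman a b).re ^ 4 :=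
        sum_le_sum_of_subset_of_nonneg (subset_univ _) fun _ _ _ =>
          sum_nonneg fun _ _ => by positivity
    _ = p ^ 2 * #(kloostermanQuadruples (p := p)) := hmoment
    _ ≤ p ^ 2 * (3 * p ^ 2) := by
        gcongr
        exact_mod_cast card_kloostermanQuadruples_le
    _ = 3 * p ^ 4 := by ring

lemma re_kloosterman_le (hp : 1000 ≤ p) {a : ZMod p} (ha : a ≠ 0) (b : ZMod p) :
    (kloosterman a b).re ≤ (p + 1) / 4 := by
  rw [kloosterman_eq_kloosterman_one_mul ha]
  by_contra! hlt
  have hp' : (1000 : ℝ) ≤ p := by exact_mod_cast hp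
  have h4 : ((p : ℝ) / 4) ^ 4 ≤ (kloosterman 1 (a * b)).re ^ 4 :=
    pow_le_pow_left₀ (by positivity) (by linarith) 4
  have := (mul_le_mul_of_nonneg_left h4 (by linarith : (0 : ℝ) ≤ p - 1)).trans
    (re_kloosterman_one_pow_four_le (a * b))
  nlinarith [pow_pos (by linarith : (0 : ℝ) < p) 4]

noncomputable def fourier (ε : ZMod p × ZMod p → ℝ) (m : ZMod p × ZMod p) : ℂ :=
  ∑ x, ε x * ψ (dot m x)

lemma sum_normSq_fourier_mul_stdAddChar_dot (ε : ZMod p × ZMod p → ℝ) (z : ZMod p × ZMod p) :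
    ∑ m, (Complex.normSq (fourier ε m) : ℂ) * ψ (dot m z) =
      p ^ 2 * ∑ x, (ε x * ε (x + z) : ℝ) := by
  have hexpand (m : ZMod p × ZMod p) : (Complex.normSq (fourier ε m) : ℂ) * ψ (dot m z) =
      ∑ x, ∑ y, (ε x * ε y : ℂ) * ψ (dot (x - y + z) m) := by
    rw [← Complex.mul_conj, fourier, map_sum, sum_mul_sum, sum_mul]
    refine sum_congr rfl fun x _ => ?_
    rw [sum_mul]
    refine sum_congr rfl fun y _ => ?_
    rw [map_mul, Complex.conj_ofReal, ← AddChar.map_neg_eq_conj]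
    have : dot (x - y + z) m = dot m x + -dot m y + dot m z := by
      simp only [dot, Prod.fst_add, Prod.snd_add, Prod.fst_sub, Prod.snd_sub]; ring
    rw [this, AddChar.map_add_eq_mul, AddChar.map_add_eq_mul]
    ring
  calc ∑ m, (Complex.normSq (fourier ε m) : ℂ) * ψ (dot m z)
      = ∑ x, ∑ y, (ε x * ε y : ℂ) * ∑ m, ψ (dot (x - y + z) m) := by
        simp_rw [hexpand, mul_sum]
        exact sum_comm.trans (sum_congr rfl fun x _ => sum_comm)
    _ = ∑ x, ∑ y, if y = x + z then (p : ℂ) ^ 2 * (ε x * ε y : ℂ) else 0 := by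
        refine sum_congr rfl fun x _ => sum_congr rfl fun y _ => ?_
        rw [sum_stdAddChar_dot]
        have : x - y + z = 0 ↔ y = x + z := by
          rw [sub_add_eq_add_sub, sub_eq_zero, eq_comm]
        simp only [this]
        split_ifs <;> ring
    _ = p ^ 2 * ∑ x, (ε x * ε (x + z) : ℝ) := by
        simp only [sum_ite_eq', mem_univ, if_true]
        push_cast
        rw [mul_sum]

lemma sum_normSq_fourier (ε : ZMod p × ZMod p → ℝ) :
    ∑ m, Complex.normSq (fourier ε m) = p ^ 2 * ∑ x, ε x ^ 2 := by
  have h := sum_normSq_fourier_mul_stdAddChar_dot ε 0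
  simp only [dot, Prod.fst_zero, Prod.snd_zero, mul_zero, add_zero, AddChar.map_zero_eq_one,
    mul_one] at h
  simp_rw [sq (ε _)]
  exact_mod_cast h

/-- Detect `sqNorm z = d` by summing `ψ (s * (sqNorm z - d))` over `s`; for `s ≠ 0` the sum
over `z` is then a Gauss sum. -/
lemma sum_circle_stdAddChar_dot (hp3 : p % 4 = 3) (d : ZMod p) (m : ZMod p × ZMod p) :
    ∑ z ∈ circle d, ψ (dot m z) =
      (if m = 0 then (p : ℂ) else 0) - kloosterman (-d) (-sqNorm m / 4) := by
  have hp0 : (p : ℂ) ≠ 0 := by exact_mod_cast (Fact.out : p.Prime).ne_zero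
  have hdetect (z : ZMod p × ZMod p) :
      ∑ s : ZMod p, ψ (s * (sqNorm z - d)) = if z ∈ circle d then (p : ℂ) else 0 := by
    simp only [sum_stdAddChar_mul, mem_circle, sub_eq_zero]
  have hgauss (s : ZMod p) (hs : s ≠ 0) : ∑ z, ψ (s * (sqNorm z - d)) * ψ (dot m z) =
      -p * ψ (-d * s + -sqNorm m / 4 * s⁻¹) := calc
    _ = ∑ z, ψ (s * sqNorm z + dot m z) * ψ (-d * s) :=
        sum_congr rfl fun z _ => by
          rw [← AddChar.map_add_eq_mul, ← AddChar.map_add_eq_mul]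
          congr 1
          ring
    _ = -p * ψ (-sqNorm m / (4 * s)) * ψ (-d * s) := by
        rw [← sum_mul, sum_stdAddChar_sqNorm_add_dot hp3 hs]
    _ = _ := by
        rw [mul_assoc, ← AddChar.map_add_eq_mul]
        congr 2
        field_simp
        ring
  apply mul_left_cancel₀ hp0
  calc (p : ℂ) * ∑ z ∈ circle d, ψ (dot m z)
      = ∑ s, ∑ z, ψ (s * (sqNorm z - d)) * ψ (dot m z) := by
        rw [sum_comm]
        simp_rw [← sum_mul, hdetect, ite_mul, zero_mul, sum_ite_mem, univ_inter, mul_sum]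
    _ = ∑ z, ψ (dot m z) + ∑ s ∈ univ.erase 0, -p * ψ (-d * s + -sqNorm m / 4 * s⁻¹) := by
        rw [← add_sum_erase _ _ (mem_univ 0),
          sum_congr rfl fun s hs => hgauss s (ne_of_mem_erase hs)]
        simp
    _ = _ := by
        rw [sum_stdAddChar_dot, ← mul_sum, kloosterman]
        split_ifs <;> ring

noncomputable def circleCorrelation (ε : ZMod p × ZMod p → ℝ) (d : ZMod p) : ℝ :=
  ∑ z ∈ circle d, ∑ x, ε x * ε (x + z)

lemma sq_mul_circleCorrelation (ε : ZMod p × ZMod p → ℝ) (d : ZMod p) :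
    (p : ℝ) ^ 2 * circleCorrelation ε d =
      ∑ m, Complex.normSq (fourier ε m) * (∑ z ∈ circle d, ψ (dot m z)).re := by
  have h : (((p : ℝ) ^ 2 * circleCorrelation ε d : ℝ) : ℂ) =
      ∑ m, (Complex.normSq (fourier ε m) : ℂ) * ∑ z ∈ circle d, ψ (dot m z) := by
    simp_rw [mul_sum (s := circle d)]
    rw [sum_comm, circleCorrelation, mul_sum]
    push_cast
    exact sum_congr rfl fun z _ => by
      exact_mod_cast (sum_normSq_fourier_mul_stdAddChar_dot ε z).symm
  simpa only [Complex.re_sum, Complex.re_ofReal_mul, Complex.ofReal_re] using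
    congrArg Complex.re h

lemma neg_le_circleCorrelation (hp3 : p % 4 = 3) (hp : 1000 ≤ p) {ε : ZMod p × ZMod p → ℝ}
    (hε : ∀ x, ε x = 1 ∨ ε x = -1) {d : ZMod p} (hd : d ≠ 0) :
    -((p + 1) * p ^ 2 / 4) ≤ circleCorrelation ε d := by
  have hre (m : ZMod p × ZMod p) : -((p + 1) / 4 : ℝ) ≤ (∑ z ∈ circle d, ψ (dot m z)).re := by
    by_cases hm : m = 0
    · simp only [hm, dot, Prod.fst_zero, Prod.snd_zero, zero_mul, add_zero,
        AddChar.map_zero_eq_one, sum_const, nsmul_eq_mul, mul_one, Complex.natCast_re]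
      linarith [(Nat.cast_nonneg p : (0 : ℝ) ≤ p), (Nat.cast_nonneg _ : (0 : ℝ) ≤ #(circle d))]
    · rw [sum_circle_stdAddChar_dot hp3, if_neg hm, zero_sub, Complex.neg_re, neg_le_neg_iff]
      exact re_kloosterman_le hp (neg_ne_zero.2 hd) _
  have hparseval : ∑ m, Complex.normSq (fourier ε m) = (p : ℝ) ^ 4 := by
    have hsq (x : ZMod p × ZMod p) : ε x ^ 2 = 1 := by rcases hε x with h | h <;> simp [h]
    simp [sum_normSq_fourier, hsq, sq]
    ring
  have hbound : (p : ℝ) ^ 2 * -((p + 1) * p ^ 2 / 4) ≤ p ^ 2 * circleCorrelation ε d := calc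
    _ = ∑ m, Complex.normSq (fourier ε m) * -((p + 1) / 4 : ℝ) := by
        rw [← sum_mul, hparseval]
        ring
    _ ≤ _ := sum_le_sum fun m _ => mul_le_mul_of_nonneg_left (hre m) (Complex.normSq_nonneg _)
    _ = _ := (sq_mul_circleCorrelation ε d).symm
  exact le_of_mul_le_mul_left hbound (by positivity [(Fact.out : p.Prime).pos])

lemma sqNorm_gaussMul_add_sub_gaussMul_add {r : ZMod p × ZMod p} (hr : r ∈ circle 1)
    (P Q t : ZMod p × ZMod p) :
    sqNorm ((gaussMul r P + t) - (gaussMul r Q + t)) = sqNorm (P - Q) := by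
  rw [add_sub_add_right_eq_sub, gaussMul_sub, sqNorm_gaussMul, mem_circle.1 hr, one_mul]

lemma sum_circle_one_sum_mul_gaussMul_add (ε : ZMod p × ZMod p → ℝ) {P Q : ZMod p × ZMod p}
    (h : sqNorm (Q - P) ≠ 0) :
    ∑ r ∈ circle 1, ∑ t, ε (gaussMul r P + t) * ε (gaussMul r Q + t) =
      circleCorrelation ε (sqNorm (Q - P)) := by
  have htranslate (r : ZMod p × ZMod p) : ∑ t, ε (gaussMul r P + t) * ε (gaussMul r Q + t) =
      ∑ x, ε x * ε (x + gaussMul r (Q - P)) := by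
    refine Fintype.sum_equiv (Equiv.addLeft (gaussMul r P)) _ _ fun t => ?_
    dsimp only [Equiv.coe_addLeft]
    rw [← gaussMul_sub]
    congr 2
    abel
  simp_rw [htranslate]
  exact sum_circle_one_gaussMul h fun z => ∑ x, ε x * ε (x + z)

lemma eq_and_eq_of_one_add_mul_add_mul_add_mul_ne_zero {a b c : ℝ} (ha : a = 1 ∨ a = -1)
    (hb : b = 1 ∨ b = -1) (hc : c = 1 ∨ c = -1) (h : 1 + a * b + b * c + a * c ≠ 0) :
    a = b ∧ b = c := by
  rcases ha with rfl | rfl <;> rcases hb with rfl | rfl <;> rcases hc with rfl | rfl <;>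
    norm_num at h <;> norm_num

theorem exists_gaussMul_add_eq_and_eq (hp3 : p % 4 = 3) (hp : 1000 ≤ p)
    {ε : ZMod p × ZMod p → ℝ} (hε : ∀ x, ε x = 1 ∨ ε x = -1) {A B C : ZMod p × ZMod p}
    (hAB : A ≠ B) (hBC : B ≠ C) (hAC : A ≠ C) :
    ∃ r ∈ circle 1, ∃ t, ε (gaussMul r A + t) = ε (gaussMul r B + t) ∧
      ε (gaussMul r B + t) = ε (gaussMul r C + t) := by
  have hne {P Q : ZMod p × ZMod p} (h : P ≠ Q) : sqNorm (Q - P) ≠ 0 := by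
    rwa [Ne, sqNorm_eq_zero_iff hp3, sub_eq_zero, eq_comm]
  have hsum : ∑ r ∈ circle 1, ∑ t, (1 + ε (gaussMul r A + t) * ε (gaussMul r B + t) +
      ε (gaussMul r B + t) * ε (gaussMul r C + t) + ε (gaussMul r A + t) * ε (gaussMul r C + t))
      ≠ 0 := by
    simp only [sum_add_distrib, sum_circle_one_sum_mul_gaussMul_add ε (hne hAB),
      sum_circle_one_sum_mul_gaussMul_add ε (hne hBC),
      sum_circle_one_sum_mul_gaussMul_add ε (hne hAC), sum_const, card_univ, Fintype.card_prod,
      ZMod.card, card_circle_one hp3, nsmul_eq_mul]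
    have h₁ := neg_le_circleCorrelation hp3 hp hε (hne hAB)
    have h₂ := neg_le_circleCorrelation hp3 hp hε (hne hBC)
    have h₃ := neg_le_circleCorrelation hp3 hp hε (hne hAC)
    have hp0 : (0 : ℝ) < (p + 1) * p ^ 2 := by positivity
    push_cast
    exact ne_of_gt (by linarith)
  obtain ⟨r, hr, hr'⟩ := exists_ne_zero_of_sum_ne_zero hsum
  obtain ⟨t, -, ht⟩ := exists_ne_zero_of_sum_ne_zero hr'
  exact ⟨r, hr, t, eq_and_eq_of_one_add_mul_add_mul_add_mul_ne_zero (hε _) (hε _) (hε _) ht⟩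

end MonochromaticTriangle

open MonochromaticTriangle in
/-- There is a constant `p₀` such that for every prime `p > p₀` with
`p ≡ 3 (mod 4)` the following holds. Let `A, B, C` be three pairwise distinct points of
`Π = F_p × F_p` forming a non-equilateral triangle (the squared side-lengths are not all
equal). Then for any partition of `Π` into two color classes there is a monochromatic
triangle congruent to `ABC`. -/
theorem monochromatic_congruent_triangle_finite :
    ∃ p₀ : ℕ, ∀ p : ℕ, p.Prime → p₀ < p → p % 4 = 3 →
      ∀ A B C : ZMod p × ZMod p, A ≠ B → B ≠ C → A ≠ C →
        ¬(sqNorm (A - B) = sqNorm (B - C) ∧ sqNorm (B - C) = sqNorm (A - C)) →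
        ∀ X Y : Set (ZMod p × ZMod p), X ∪ Y = Set.univ → Disjoint X Y →
          ∃ x y z : ZMod p × ZMod p,
            sqNorm (x - y) = sqNorm (A - B) ∧
            sqNorm (y - z) = sqNorm (B - C) ∧
            sqNorm (x - z) = sqNorm (A - C) ∧
            ((x ∈ X ∧ y ∈ X ∧ z ∈ X) ∨ (x ∈ Y ∧ y ∈ Y ∧ z ∈ Y)) := by
  classical
  refine ⟨1000, fun p hp hp₀ hp3 A B C hAB hBC hAC _ X Y hXY _ => ?_⟩
  have := Fact.mk hp
  let ε : ZMod p × ZMod p → ℝ := fun x => if x ∈ X then 1 else -1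
  have hε (x : ZMod p × ZMod p) : ε x = 1 ∨ ε x = -1 := by
    by_cases hx : x ∈ X <;> simp [ε, hx]
  have hε_eq {x y : ZMod p × ZMod p} (h : ε x = ε y) : x ∈ X ↔ y ∈ X := by
    by_cases hx : x ∈ X <;> by_cases hy : y ∈ X <;> simp [ε, hx, hy] at h ⊢ <;> norm_num at h
  have hY {x : ZMod p × ZMod p} (hx : x ∉ X) : x ∈ Y :=
    ((hXY ▸ Set.mem_univ x : x ∈ X ∪ Y)).resolve_left hx
  obtain ⟨r, hr, t, hxy, hyz⟩ := exists_gaussMul_add_eq_and_eq hp3 hp₀.le hε hAB hBC hAC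
  refine ⟨gaussMul r A + t, gaussMul r B + t, gaussMul r C + t,
    sqNorm_gaussMul_add_sub_gaussMul_add hr _ _ _, sqNorm_gaussMul_add_sub_gaussMul_add hr _ _ _,
    sqNorm_gaussMul_add_sub_gaussMul_add hr _ _ _, ?_⟩
  by_cases hx : gaussMul r A + t ∈ X
  · exact Or.inl ⟨hx, (hε_eq hxy).1 hx, (hε_eq hyz).1 ((hε_eq hxy).1 hx)⟩
  · exact Or.inr ⟨hY hx, hY (mt (hε_eq hxy).2 hx), hY (mt (hε_eq (hxy.trans hyz)).2 hx)⟩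
end

section
/- There is a constant p₀ such that the following holds for every prime p > p₀. Let a, b ∈ F_p be nonzero elements such that a/b is a quadratic residue modulo p. Then for any partition of Π = F_p × F_p into two color classes there exist points x, y, z of the same color which are collinear (z − y = λ·(y − x) for some λ ∈ F_p) and satisfy ‖y−x‖ = a and ‖z−y‖ = b. -/
set_option maxHeartbeats 1000000


lemma sqNorm_smul {p : ℕ} (t : ZMod p) (v : ZMod p × ZMod p) :
    sqNorm (t • v) = t ^ 2 * sqNorm v := by
  simp only [sqNorm, Prod.smul_fst, Prod.smul_snd, smul_eq_mul]; ring

lemma sqNorm_neg {p : ℕ} (v : ZMod p × ZMod p) : sqNorm (-v) = sqNorm v := by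
  simp [sqNorm]

lemma color_flip {α : Type*} (X Y : Set α)
    (hmem : ∀ t, t ∈ X ∨ t ∈ Y) (hnand : ∀ t, ¬(t ∈ X ∧ t ∈ Y)) (x y z : α)
    (hxy : x ∈ X ↔ y ∈ X)
    (h : ¬((x ∈ X ∧ y ∈ X ∧ z ∈ X) ∨ (x ∈ Y ∧ y ∈ Y ∧ z ∈ Y))) :
    z ∈ X ↔ ¬(y ∈ X) := by
  have m1 := hmem x; have m2 := hmem y; have m3 := hmem z
  have n1 := hnand x; have n2 := hnand y; have n3 := hnand z
  tauto

lemma alt_even (p : ℕ) (Q : ℕ → Prop) (h : ∀ k, (Q (k + 1) ↔ ¬ Q k))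
    (hp : Q p ↔ Q 0) : Even p := by
  have key : ∀ k, (Q k ↔ Q 0) ↔ Even k := by
    intro k
    induction k with
    | zero => simp
    | succ n ih => rw [Nat.even_add_one, ← ih, h n]; tauto
  exact (key p).mp hp

/-- There is a constant `p₀` such that for every prime `p > p₀` the
following holds. Let `a, b ∈ F_p` be nonzero with `a/b` a quadratic residue. Then for
any partition of `Π = F_p × F_p` into two color classes there exist collinear points
`x, y, z` of the same color with `‖y−x‖ = a` and `‖z−y‖ = b`. -/
theorem monochromatic_collinear_triple_finite :
    ∃ p₀ : ℕ, ∀ p : ℕ, p.Prime → p₀ < p →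
      ∀ a b : ZMod p, a ≠ 0 → b ≠ 0 → IsSquare (a * b⁻¹) →
        ∀ X Y : Set (ZMod p × ZMod p), X ∪ Y = Set.univ → Disjoint X Y →
          ∃ x y z : ZMod p × ZMod p,
            (∃ lam : ZMod p, z - y = lam • (y - x)) ∧
            sqNorm (y - x) = a ∧ sqNorm (z - y) = b ∧
            ((x ∈ X ∧ y ∈ X ∧ z ∈ X) ∨ (x ∈ Y ∧ y ∈ Y ∧ z ∈ Y)) := by
  refine ⟨2, fun p hp hp2 a b ha hb hsq X Y hUnion hDisj => ?_⟩
  haveI : Fact p.Prime := ⟨hp⟩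
  by_contra hcon
  have H : ∀ x y z : ZMod p × ZMod p, (∃ lam : ZMod p, z - y = lam • (y - x)) →
      sqNorm (y - x) = a → sqNorm (z - y) = b →
      ¬((x ∈ X ∧ y ∈ X ∧ z ∈ X) ∨ (x ∈ Y ∧ y ∈ Y ∧ z ∈ Y)) :=
    fun x y z h1 h2 h3 h4 => hcon ⟨x, y, z, h1, h2, h3, h4⟩
  have hmem : ∀ t : ZMod p × ZMod p, t ∈ X ∨ t ∈ Y := by
    intro t
    have : t ∈ X ∪ Y := by rw [hUnion]; trivial
    exact this
  have hnand : ∀ t : ZMod p × ZMod p, ¬(t ∈ X ∧ t ∈ Y) :=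
    fun t h => Set.disjoint_left.mp hDisj h.1 h.2
  have hpodd : ¬ Even p :=
    Nat.not_even_iff_odd.mpr (hp.odd_of_ne_two (by omega))
  -- a vector of squared norm a
  obtain ⟨u1, u2, hu⟩ := ZMod.sq_add_sq p a
  set u : ZMod p × ZMod p := (u1, u2) with hu_def
  have hua : sqNorm u = a := hu
  -- the scaling factor s with s^2 * a = b
  obtain ⟨r, hr⟩ := hsq
  have hr0 : r ≠ 0 := by
    intro h
    rw [h, mul_zero] at hr
    exact (mul_ne_zero ha (inv_ne_zero hb)) hr
  set s : ZMod p := r⁻¹ with hs_def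
  have hs2 : s ^ 2 * a = b := by
    have : a = r * r * b := by
      field_simp at hr ⊢
      linear_combination hr
    rw [hs_def, this]
    field_simp
  -- smul of p is zero
  have hpz : ∀ v : ZMod p × ZMod p, p • v = 0 := by
    intro v
    rw [← Nat.cast_smul_eq_nsmul (ZMod p), ZMod.natCast_self, zero_smul]
  -- key flip lemma
  have B : ∀ y : ZMod p × ZMod p, ((y ∈ X) ↔ (y + u ∈ X)) →
      (((y - s • u ∈ X) ↔ ¬(y ∈ X)) ∧ ((y + u - s • u ∈ X) ↔ ¬(y ∈ X))) := by
    intro y hy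
    have e1 : y - (y + u) = -u := by abel
    have e2 : (y - s • u) - y = -(s • u) := by abel
    have e3 : (y + u - s • u) - (y + u) = -(s • u) := by abel
    have hb1 : sqNorm (-(s • u)) = b := by
      rw [sqNorm_neg, sqNorm_smul, hua, hs2]
    have h1 := H (y + u) y (y - s • u)
      ⟨s, by rw [e2, e1, smul_neg]⟩
      (by rw [e1, sqNorm_neg, hua])
      (by rw [e2]; exact hb1)
    have h2 := H y (y + u) (y + u - s • u)
      ⟨-s, by have e4 : (y + u) - y = u := by abel
              rw [e3, e4, neg_smul]⟩
      (by have e4 : (y + u) - y = u := by abel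
          rw [e4, hua])
      (by rw [e3]; exact hb1)
    exact ⟨color_flip X Y hmem hnand _ _ _ hy.symm h1,
           (color_flip X Y hmem hnand _ _ _ hy h2).trans (not_congr hy).symm⟩
  by_cases hcase : ∀ x : ZMod p × ZMod p, ¬(x ∈ X ↔ x + u ∈ X)
  · -- every u-step flips the color : contradiction with p odd
    have heven : Even p := by
      refine alt_even p (fun k => k • u ∈ X) ?_ ?_
      · intro k
        have := hcase (k • u)
        show (k + 1) • u ∈ X ↔ ¬(k • u ∈ X)
        rw [succ_nsmul]
        tauto
      · show p • u ∈ X ↔ (0 : ℕ) • u ∈ X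
        rw [hpz u, zero_nsmul]
    exact hpodd heven
  · push_neg at hcase
    obtain ⟨x₀, hx₀⟩ := hcase
    have estep : ∀ n : ℕ, x₀ - (n + 1) • (s • u) = (x₀ - n • (s • u)) - s • u := by
      intro n; rw [succ_nsmul]; abel
    have eu : ∀ n : ℕ, (x₀ - n • (s • u)) + u - s • u = (x₀ - (n + 1) • (s • u)) + u := by
      intro n; rw [succ_nsmul]; abel
    have R : ∀ k : ℕ, ((x₀ - k • (s • u)) ∈ X ↔ (x₀ - k • (s • u)) + u ∈ X) := by
      intro k
      induction k with
      | zero => simpa using hx₀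
      | succ n ih =>
        have hB := B _ ih
        rw [estep n]
        rw [eu n, estep n] at hB
        tauto
    have heven : Even p := by
      refine alt_even p (fun k => (x₀ - k • (s • u)) ∈ X) ?_ ?_
      · intro k
        have hB := B _ (R k)
        show x₀ - (k + 1) • (s • u) ∈ X ↔ ¬(x₀ - k • (s • u) ∈ X)
        rw [estep k]
        exact hB.1
      · show x₀ - p • (s • u) ∈ X ↔ x₀ - (0 : ℕ) • (s • u) ∈ X
        rw [hpz (s • u), zero_nsmul]
    exact hpodd heven
end

section
/- For every real t ≥ 0 one has 2·J₀(t) + J₀(2t) > −1, where J₀ is the zeroth Bessel function of the first kind. -/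
/-- The zeroth Bessel function of the first kind,
`J₀(t) = ∑_{k=0}^∞ (−1)^k (t/2)^{2k} / (k!)²`. -/
noncomputable def besselJ0 (t : ℝ) : ℝ :=
  ∑' k : ℕ, (-1 : ℝ) ^ k * (t / 2) ^ (2 * k) / ((Nat.factorial k : ℝ)) ^ 2

/-!
Write `J₀(t) = C₀(-(t/2)²)` with the Bessel–Clifford functions `Cₙ(z) = ∑ zᵏ / (k! (k+n)!)`,
which satisfy `Cₙ' = Cₙ₊₁` and `z Cₙ₊₂ = Cₙ - (n+1) Cₙ₊₁`. Then `E = C₀² - z C₁²` has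
`E' = C₁² ≥ 0`, so `E(z) ≤ E(0) = 1` for `z ≤ 0`. Along `z = -(t/2)²` this bounds
`|J₀'(t)| = |t/2 · C₁(z)|` by `1`, so `f(t) = 2 J₀(t) + J₀(2t)` is `4`-Lipschitz; and for
`|t| ≥ 6` it gives `J₀(t)² ≤ E(-9) < 1/9`, hence `f(t) > -3 · (1/3)`. For `|t| ≤ 6`, since `f`
is even, it suffices to know `f(q) > -1 + 4r` for the centres `q` and radii `r` of finitely many
intervals covering `[0, 6]`, which truncated series verify.
-/

open Nat Finset Metric

theorem summable_pow_div_factorial_mul_factorial (m : ℕ) (x : ℝ) :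
    Summable fun k : ℕ => x ^ k / ((k ! : ℝ) * (k + m)!) := by
  refine (Real.summable_pow_div_factorial |x|).of_norm_bounded fun k => ?_
  rw [Real.norm_eq_abs, abs_div, abs_pow, abs_of_pos (by positivity : (0 : ℝ) < k ! * (k + m)!)]
  gcongr
  exact le_mul_of_one_le_right (by positivity) (Nat.one_le_cast.mpr (k + m).factorial_pos)

theorem hasDerivAt_tsum_mul_pow {a : ℕ → ℝ}
    (ha : ∀ R, Summable fun k : ℕ => |a (k + 1)| * (k + 1) * R ^ k) (x : ℝ) :
    HasDerivAt (fun y => ∑' k, a k * y ^ k) (∑' k, (k + 1) * a (k + 1) * x ^ k) x := by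
  set R := |x| + 1
  have hx : x ∈ ball (0 : ℝ) R := by simp [R]
  have hbound : ∀ k, ∀ y ∈ ball (0 : ℝ) R,
      ‖a k * (k * y ^ (k - 1))‖ ≤ |a k| * k * R ^ (k - 1) := by
    intro k y hy
    rw [mem_ball_zero_iff] at hy
    rw [norm_mul, norm_mul, norm_pow, Real.norm_natCast, Real.norm_eq_abs, mul_assoc]
    gcongr
  have hu : Summable fun k : ℕ => |a k| * k * R ^ (k - 1) := by
    refine (summable_nat_add_iff 1).mp ?_
    simpa using ha R
  have h0 : Summable fun k => a k * (0 : ℝ) ^ k := by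
    refine summable_of_ne_finset_zero (s := {0}) fun k hk => ?_
    simp [zero_pow (by simpa using hk)]
  have H := hasDerivAt_tsum_of_isPreconnected hu isOpen_ball (convex_ball 0 R).isPreconnected
    (fun k y _ => (hasDerivAt_pow k y).const_mul (a k)) hbound (mem_ball_self (by positivity))
    h0 hx
  have hshift : ∑' k : ℕ, a k * (k * x ^ (k - 1)) = ∑' k : ℕ, (k + 1) * a (k + 1) * x ^ k := by
    rw [(Summable.of_norm_bounded hu fun k => hbound k x hx).tsum_eq_zero_add]
    simp only [CharP.cast_eq_zero, zero_mul, mul_zero, zero_add, Nat.cast_add, Nat.cast_one,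
      add_tsub_cancel_right]
    exact tsum_congr fun k => by ring
  rwa [hshift] at H

/-- The Bessel–Clifford function `Cₙ`; `Jₙ(t) = (t/2)ⁿ Cₙ(-(t/2)²)`. -/
noncomputable def besselClifford (n : ℕ) (z : ℝ) : ℝ :=
  ∑' k : ℕ, z ^ k / ((k ! : ℝ) * (k + n)!)

theorem succ_mul_inv_factorial_mul_factorial (n k : ℕ) :
    ((k + 1 : ℕ) : ℝ) * (((k + 1)! : ℝ) * (k + 1 + n)!)⁻¹ = ((k ! : ℝ) * (k + (n + 1))!)⁻¹ := by
  rw [factorial_succ, show k + 1 + n = k + (n + 1) by ring]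
  push_cast
  field_simp

theorem hasDerivAt_besselClifford (n : ℕ) (z : ℝ) :
    HasDerivAt (besselClifford n) (besselClifford (n + 1) z) z := by
  have hseries : besselClifford n = fun z => ∑' k : ℕ, ((k ! : ℝ) * (k + n)!)⁻¹ * z ^ k :=
    funext fun z => tsum_congr fun k => div_eq_inv_mul _ _
  rw [hseries]
  have hcoeff := succ_mul_inv_factorial_mul_factorial n
  push_cast at hcoeff
  convert hasDerivAt_tsum_mul_pow (fun R => ?_) z using 1
  · exact tsum_congr fun k => by rw [hcoeff, div_eq_inv_mul]
  · refine (summable_pow_div_factorial_mul_factorial (n + 1) R).congr fun k => ?_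
    rw [abs_of_pos (by positivity), mul_comm _ ((k : ℝ) + 1), hcoeff, div_eq_inv_mul]

theorem besselClifford_apply_zero (n : ℕ) : besselClifford n 0 = ((n ! : ℝ))⁻¹ := by
  rw [besselClifford, tsum_eq_single 0 fun k hk => by simp [zero_pow hk]]
  simp

theorem mul_besselClifford_add_two (n : ℕ) (z : ℝ) :
    z * besselClifford (n + 2) z = besselClifford n z - (n + 1) * besselClifford (n + 1) z := by
  have hs := summable_pow_div_factorial_mul_factorial
  have hdiff := (hs n z).sub ((hs (n + 1) z).mul_left ((n : ℝ) + 1))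
  rw [besselClifford, besselClifford, besselClifford, ← tsum_mul_left, ← tsum_mul_left,
    ← (hs n z).tsum_sub ((hs (n + 1) z).mul_left _), hdiff.tsum_eq_zero_add]
  have h0 : (0 : ℝ) =
      z ^ 0 / ((0 ! : ℝ) * (0 + n)!) - (n + 1) * (z ^ 0 / ((0 ! : ℝ) * (0 + (n + 1))!)) := by
    rw [zero_add, zero_add, factorial_succ]
    push_cast
    field_simp
    ring
  rw [← h0, zero_add]
  refine tsum_congr fun j => ?_
  rw [show j + (n + 2) = j + n + 1 + 1 by ring, show j + 1 + n = j + n + 1 by ring,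
    show j + 1 + (n + 1) = j + n + 1 + 1 by ring, factorial_succ (j + n + 1), factorial_succ j]
  push_cast
  field_simp
  ring

theorem abs_besselClifford_sub_sum_range_le (n N : ℕ) {z : ℝ} (hz : 2 * |z| ≤ (N + 1) ^ 2) :
    |besselClifford n z - ∑ k ∈ range N, z ^ k / ((k ! : ℝ) * (k + n)!)| ≤
      2 * |z| ^ N / (N ! : ℝ) ^ 2 := by
  rw [besselClifford, ← (summable_pow_div_factorial_mul_factorial n z).sum_add_tsum_nat_add N,
    add_sub_cancel_left, ← Real.norm_eq_abs]
  have hratio : |z| / (N + 1) ^ 2 ≤ 1 / 2 := by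
    rw [div_le_iff₀ (by positivity)]
    linarith
  have hfact : ∀ i : ℕ, (N ! : ℝ) * (N + 1) ^ i ≤ (i + N)! := fun i => by
    have := factorial_mul_pow_le_factorial (m := N) (n := i)
    rw [add_comm N i] at this
    exact_mod_cast this
  refine (tsum_of_norm_bounded (hasSum_geometric_two.mul_left (|z| ^ N / (N ! : ℝ) ^ 2))
    fun i => ?_).trans_eq (by ring)
  calc ‖z ^ (i + N) / ((i + N)! * (i + N + n)! : ℝ)‖
      = |z| ^ N * |z| ^ i / ((i + N)! * (i + N + n)! : ℝ) := by
        rw [Real.norm_eq_abs, abs_div, abs_pow, pow_add, mul_comm (|z| ^ i),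
          abs_of_pos (show (0 : ℝ) < (i + N)! * (i + N + n)! by positivity)]
    _ ≤ |z| ^ N * |z| ^ i / ((N ! * (N + 1) ^ i) * (N ! * (N + 1) ^ i) : ℝ) := by
        gcongr
        exacts [hfact i, (hfact i).trans (mod_cast factorial_le (by omega))]
    _ = |z| ^ N / (N ! : ℝ) ^ 2 * (|z| / (N + 1) ^ 2) ^ i := by
        rw [div_pow, ← pow_mul, mul_comm 2 i, pow_mul]
        field_simp
    _ ≤ |z| ^ N / (N ! : ℝ) ^ 2 * (1 / 2) ^ i := by gcongr

/-- Along `z = -(t/2)²` this is `J₀(t)² + J₁(t)²`. -/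
noncomputable def besselEnergy (z : ℝ) : ℝ :=
  besselClifford 0 z ^ 2 - z * besselClifford 1 z ^ 2

theorem hasDerivAt_besselEnergy (z : ℝ) :
    HasDerivAt besselEnergy (besselClifford 1 z ^ 2) z := by
  have h := ((hasDerivAt_besselClifford 0 z).pow 2).sub
    ((hasDerivAt_id z).mul ((hasDerivAt_besselClifford 1 z).pow 2))
  refine h.congr_deriv ?_
  have hrec := mul_besselClifford_add_two 0 z
  simp only [Pi.pow_apply, id, CharP.cast_eq_zero, zero_add, one_mul] at hrec ⊢
  linear_combination (-2 * besselClifford 1 z) * hrec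

theorem monotone_besselEnergy : Monotone besselEnergy :=
  monotone_of_deriv_nonneg (fun z => (hasDerivAt_besselEnergy z).differentiableAt)
    fun z => (hasDerivAt_besselEnergy z).deriv ▸ sq_nonneg _

theorem besselEnergy_zero : besselEnergy 0 = 1 := by
  simp [besselEnergy, besselClifford_apply_zero]

theorem besselJ0_summand_eq (t : ℝ) (k : ℕ) :
    (-1 : ℝ) ^ k * (t / 2) ^ (2 * k) / (k ! : ℝ) ^ 2 =
      (-(t / 2) ^ 2) ^ k / ((k ! : ℝ) * (k + 0)!) := by
  rw [add_zero, neg_pow ((t / 2) ^ 2), ← pow_mul, sq ((k ! : ℝ))]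

theorem besselJ0_eq_besselClifford (t : ℝ) : besselJ0 t = besselClifford 0 (-(t / 2) ^ 2) :=
  tsum_congr (besselJ0_summand_eq t)

theorem besselJ0_abs (t : ℝ) : besselJ0 |t| = besselJ0 t := by
  simp only [besselJ0_eq_besselClifford, div_pow, sq_abs]

theorem hasDerivAt_besselJ0 (t : ℝ) :
    HasDerivAt besselJ0 (-(t / 2) * besselClifford 1 (-(t / 2) ^ 2)) t := by
  rw [show besselJ0 = fun t => besselClifford 0 (-(t / 2) ^ 2) from
    funext besselJ0_eq_besselClifford]
  refine ((hasDerivAt_besselClifford 0 _).comp t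
    (((hasDerivAt_id t).div_const 2).pow 2).neg).congr_deriv ?_
  simp only [Pi.neg_apply, Pi.pow_apply, id, zero_add]
  ring

theorem sq_besselJ0_le_besselEnergy (t : ℝ) : besselJ0 t ^ 2 ≤ besselEnergy (-(t / 2) ^ 2) := by
  rw [besselJ0_eq_besselClifford, besselEnergy, neg_mul, sub_neg_eq_add, le_add_iff_nonneg_right]
  positivity

theorem abs_half_mul_besselClifford_one_le_one (t : ℝ) :
    |(t / 2) * besselClifford 1 (-(t / 2) ^ 2)| ≤ 1 := by
  rw [← sq_le_one_iff_abs_le_one]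
  have h := monotone_besselEnergy (neg_nonpos.mpr (sq_nonneg (t / 2)))
  rw [besselEnergy_zero, besselEnergy] at h
  nlinarith [sq_nonneg (besselClifford 0 (-(t / 2) ^ 2))]

theorem lipschitzWith_one_besselJ0 : LipschitzWith 1 besselJ0 :=
  lipschitzWith_of_nnnorm_deriv_le (fun t => (hasDerivAt_besselJ0 t).differentiableAt) fun t => by
    rw [(hasDerivAt_besselJ0 t).deriv, ← NNReal.coe_le_coe, coe_nnnorm, Real.norm_eq_abs, neg_mul,
      abs_neg]
    exact abs_half_mul_besselClifford_one_le_one t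

theorem abs_two_mul_besselJ0_add_sub_le (s t : ℝ) :
    |(2 * besselJ0 s + besselJ0 (2 * s)) - (2 * besselJ0 t + besselJ0 (2 * t))| ≤ 4 * |s - t| := by
  have h₁ := lipschitzWith_one_besselJ0.dist_le_mul s t
  have h₂ := lipschitzWith_one_besselJ0.dist_le_mul (2 * s) (2 * t)
  simp only [Real.dist_eq, NNReal.coe_one, one_mul, ← mul_sub, abs_mul, abs_two] at h₁ h₂
  calc _ = |2 * (besselJ0 s - besselJ0 t) + (besselJ0 (2 * s) - besselJ0 (2 * t))| := by ring_nf
    _ ≤ |2 * (besselJ0 s - besselJ0 t)| + |besselJ0 (2 * s) - besselJ0 (2 * t)| := abs_add_le _ _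
    _ ≤ 4 * |s - t| := by rw [abs_mul, abs_two]; linarith

theorem abs_besselJ0_sub_sum_range_le {t : ℝ} (ht : |t| ≤ 13) :
    |besselJ0 t - ∑ k ∈ range 22, (-1 : ℝ) ^ k * (t / 2) ^ (2 * k) / (k ! : ℝ) ^ 2| ≤
      1 / 10 ^ 6 := by
  have hz : |-(t / 2) ^ 2| ≤ 169 / 4 := by
    rw [abs_neg, abs_pow, abs_div, abs_two]
    nlinarith [abs_nonneg t]
  calc _ = |besselClifford 0 (-(t / 2) ^ 2) -
        ∑ k ∈ range 22, (-(t / 2) ^ 2) ^ k / ((k ! : ℝ) * (k + 0)!)| := by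
        simp only [besselJ0_eq_besselClifford, besselJ0_summand_eq]
    _ ≤ 2 * |-(t / 2) ^ 2| ^ 22 / (22 ! : ℝ) ^ 2 :=
        abs_besselClifford_sub_sum_range_le 0 22 (by linarith)
    _ ≤ 2 * (169 / 4) ^ 22 / (22 ! : ℝ) ^ 2 := by gcongr
    _ ≤ 1 / 10 ^ 6 := by norm_num [Nat.factorial]

theorem besselEnergy_neg_nine_lt : besselEnergy (-9) < 1 / 9 := by
  have h₀ := abs_besselClifford_sub_sum_range_le 0 12 (z := -9) (by norm_num)
  have h₁ := abs_besselClifford_sub_sum_range_le 1 12 (z := -9) (by norm_num)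
  norm_num [Finset.sum_range_succ, Nat.factorial, abs_le] at h₀ h₁
  rw [besselEnergy]
  nlinarith

theorem abs_besselJ0_lt_of_six_le_abs {t : ℝ} (ht : 6 ≤ |t|) : |besselJ0 t| < 1 / 3 := by
  have hz : -(t / 2) ^ 2 ≤ -9 := by nlinarith [sq_abs t]
  refine abs_lt_of_sq_lt_sq ?_ (by norm_num)
  calc besselJ0 t ^ 2 ≤ besselEnergy (-(t / 2) ^ 2) := sq_besselJ0_le_besselEnergy t
    _ ≤ besselEnergy (-9) := monotone_besselEnergy hz
    _ < (1 / 3) ^ 2 := by linarith [besselEnergy_neg_nine_lt]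

theorem neg_one_lt_of_six_le_abs {t : ℝ} (ht : 6 ≤ |t|) :
    -1 < 2 * besselJ0 t + besselJ0 (2 * t) := by
  have h₁ := abs_lt.mp (abs_besselJ0_lt_of_six_le_abs ht)
  have h₂ := abs_lt.mp
    (abs_besselJ0_lt_of_six_le_abs (t := 2 * t) (by rw [abs_mul, abs_two]; linarith))
  linarith [h₁.1, h₂.1]

/-- The intervals `[q - r, q + r]` for `(q, r) ∈ L`, taken in order, cover `[a, b]`. -/
def ChainCover : ℝ → List (ℝ × ℝ) → ℝ → Prop
  | a, [], b => b < a
  | a, (q, r) :: L, b => q - r ≤ a ∧ ChainCover (q + r) L b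

theorem ChainCover.exists_abs_sub_le :
    ∀ {a b t : ℝ} {L : List (ℝ × ℝ)}, ChainCover a L b → a ≤ t → t ≤ b → ∃ p ∈ L, |t - p.1| ≤ p.2
  | _, _, _, [], h, hat, htb => absurd (h.trans_le hat) htb.not_gt
  | _, _, t, (q, r) :: L, ⟨hqa, hL⟩, hat, htb => by
    rcases le_or_gt t (q + r) with htq | htq
    · exact ⟨(q, r), List.mem_cons_self, abs_sub_le_iff.mpr ⟨by linarith, by linarith⟩⟩
    · obtain ⟨p, hp, hpt⟩ := hL.exists_abs_sub_le htq.le htb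
      exact ⟨p, List.mem_cons_of_mem _ hp, hpt⟩

/-- Pairs `(q, r)` with `r` just below `(f(q) + 1) / 4`, for `f(t) = 2 J₀(t) + J₀(2t)`. -/
def besselJ0Grid : List (ℝ × ℝ) :=
  [(0.79, 0.79), (1.86, 0.3), (2.35, 0.19), (2.7, 0.16), (3.01, 0.15), (3.3, 0.14), (3.57, 0.13),
    (3.81, 0.11), (4.01, 0.09), (4.18, 0.08), (4.33, 0.07), (4.46, 0.06), (4.58, 0.06),
    (4.71, 0.07), (4.86, 0.08), (5.04, 0.1), (5.29, 0.15), (5.69, 0.25), (6.35, 0.41)]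

theorem chainCover_besselJ0Grid : ChainCover 0 besselJ0Grid 6 := by
  norm_num [ChainCover, besselJ0Grid]

theorem besselJ0Grid_spec : ∀ p ∈ besselJ0Grid, 0 ≤ p.1 ∧ p.1 ≤ 13 / 2 ∧
    -1 + 4 * p.2 + 3 / 10 ^ 6 <
      2 * ∑ k ∈ range 22, (-1 : ℝ) ^ k * (p.1 / 2) ^ (2 * k) / (k ! : ℝ) ^ 2 +
        ∑ k ∈ range 22, (-1 : ℝ) ^ k * (2 * p.1 / 2) ^ (2 * k) / (k ! : ℝ) ^ 2 := by
  simp only [besselJ0Grid, List.forall_mem_cons, List.not_mem_nil, IsEmpty.forall_iff,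
    implies_true, and_true]
  norm_num [Finset.sum_range_succ, Nat.factorial]

theorem neg_one_lt_of_abs_le_six {t : ℝ} (ht : |t| ≤ 6) :
    -1 < 2 * besselJ0 t + besselJ0 (2 * t) := by
  obtain ⟨⟨q, r⟩, hmem, hqt⟩ := chainCover_besselJ0Grid.exists_abs_sub_le (abs_nonneg t) ht
  obtain ⟨hq₀, hq₁, hval⟩ := besselJ0Grid_spec _ hmem
  have e₁ := abs_le.mp
    (abs_besselJ0_sub_sum_range_le (t := q) (by rw [abs_of_nonneg hq₀]; linarith))
  have e₂ := abs_le.mp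
    (abs_besselJ0_sub_sum_range_le (t := 2 * q) (by rw [abs_of_nonneg (by linarith)]; linarith))
  have hlip := abs_le.mp (abs_two_mul_besselJ0_add_sub_le |t| q)
  rw [← besselJ0_abs, ← besselJ0_abs (2 * t), abs_mul, abs_two]
  dsimp only at hval hqt
  linarith [hlip.1, e₁.1, e₂.1]

theorem two_besselJ0_add_besselJ0_two_mul_gt_neg_one_general (t : ℝ) :
    2 * besselJ0 t + besselJ0 (2 * t) > -1 := by
  rcases le_or_gt |t| 6 with ht | ht
  · exact neg_one_lt_of_abs_le_six ht
  · exact neg_one_lt_of_six_le_abs ht.le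

/-- For every real `t ≥ 0` one has `2·J₀(t) + J₀(2t) > −1`. -/
theorem two_besselJ0_add_besselJ0_two_mul_gt_neg_one (t : ℝ) (ht : 0 ≤ t) :
    2 * besselJ0 t + besselJ0 (2 * t) > -1 :=
  two_besselJ0_add_besselJ0_two_mul_gt_neg_one_general t
end
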